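/- Let M_k([i,j)) denote the set of segmentations of the interval [i,j) into k contiguous segments, identified with strictly increasing sequences i = t_1 < ... < t_{k+1} = j. For any function g assigning a real value to each segment [a,b), and for any 1 ≤ t ≤ n+1, 1 ≤ k ≤ K, the set M_K([1,n+1)) of segmentations whose k-th segment starts at t is in bijection with the product M_{k-1}([1,t)) × M_{K-k+1}([t,n+1)), and consequently ∑_{m : τ_k(m)=t} ∏_{r ∈ m} g(r) = (∑_{m' ∈ M_{k-1}([1,t))} ∏_{r ∈ m'} g(r)) · (∑_{m'' ∈ M_{K-k+1}([t,n+1))} ∏_{r ∈ m''} g(r)). -/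

import Mathlib

/-!
A segmentation with `j + J` segments whose `(j+1)`-st segment starts at `t₀` is the same thing as
a segmentation of `[a, t₀)` into `j` segments followed by one of `[t₀, b)` into `J` segments:
cut the sequence of change points at index `j`, or conversely concatenate two sequences that
share the point `t₀`. Strict monotonicity of the whole sequence is that of the two halves, and
the weight, a product over consecutive pairs, splits as a product over the two halves.
-/

/-- Segmentations of `[a, b)` into `k` contiguous segments, as strictly increasing
sequences `a = t 0 < ... < t k = b` with values in `{0, ..., n+1}`. -/
def Seg (n k a b : ℕ) : Finset (Fin (k + 1) → Fin (n + 2)) :=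
  Finset.univ.filter fun t =>
    (∀ l : Fin k, t l.castSucc < t l.succ) ∧ (t 0 : ℕ) = a ∧ (t (Fin.last k) : ℕ) = b

/-- Multiplicative weight of a segmentation: product of `g` over its segments. -/
def W (n k : ℕ) (g : ℕ → ℕ → ℝ) (t : Fin (k + 1) → Fin (n + 2)) : ℝ :=
  ∏ l : Fin k, g (t l.castSucc) (t l.succ)

section Split

variable {α : Type*} {j J : ℕ}

def splitAt (m : Fin (j + J + 1) → α) : (Fin (j + 1) → α) × (Fin (J + 1) → α) :=
  (fun i => m (Fin.castLE (by omega) i), fun i => m (Fin.natAdd j i))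

-- The last point of `p.1` is dropped: it is `p.2 0` whenever the two halves fit together.
def glueAt (p : (Fin (j + 1) → α) × (Fin (J + 1) → α)) : Fin (j + J + 1) → α :=
  Fin.append (m := j) (n := J + 1) (Fin.init p.1) p.2

theorem glueAt_splitAt (m : Fin (j + J + 1) → α) : glueAt (splitAt m) = m :=
  Fin.append_castAdd_natAdd (m := j) (n := J + 1)

theorem splitAt_glueAt {p : (Fin (j + 1) → α) × (Fin (J + 1) → α)}
    (h : p.1 (Fin.last j) = p.2 0) : splitAt (glueAt p) = p := by
  refine Prod.ext (funext fun i => ?_) (funext fun i => Fin.append_right (Fin.init p.1) p.2 i)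
  induction i using Fin.lastCases with
  | last => exact (Fin.append_right (Fin.init p.1) p.2 0).trans h.symm
  | cast i => exact Fin.append_left (Fin.init p.1) p.2 i

theorem strictMono_iff_splitAt [Preorder α] {m : Fin (j + J + 1) → α} :
    StrictMono m ↔ StrictMono (splitAt m).1 ∧ StrictMono (splitAt m).2 := by
  simp only [Fin.strictMono_iff_lt_succ]
  refine ⟨fun h => ⟨fun l => h (Fin.castAdd J l), fun l => h (Fin.natAdd j l)⟩, ?_⟩
  rintro ⟨h₁, h₂⟩ l
  induction l using Fin.addCases with
  | left l => exact h₁ l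
  | right l => exact h₂ l

end Split

theorem mem_Seg {n k a b : ℕ} {t : Fin (k + 1) → Fin (n + 2)} :
    t ∈ Seg n k a b ↔ StrictMono t ∧ (t 0 : ℕ) = a ∧ (t (Fin.last k) : ℕ) = b := by
  simp [Seg, Fin.strictMono_iff_lt_succ]

theorem W_eq_mul_splitAt (n j J : ℕ) (g : ℕ → ℕ → ℝ) (m : Fin (j + J + 1) → Fin (n + 2)) :
    W n (j + J) g m = W n j g (splitAt m).1 * W n J g (splitAt m).2 :=
  Fin.prod_univ_add _

theorem mem_filter_Seg_iff_splitAt {n j J a t₀ b : ℕ} {m : Fin (j + J + 1) → Fin (n + 2)} :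
    m ∈ (Seg n (j + J) a b).filter (fun m => (m ⟨j, by omega⟩ : ℕ) = t₀) ↔
      splitAt m ∈ Seg n j a t₀ ×ˢ Seg n J t₀ b := by
  simp only [Finset.mem_filter, Finset.mem_product, mem_Seg, strictMono_iff_splitAt]
  exact ⟨fun ⟨⟨⟨h₁, h₂⟩, h0, hb⟩, ht⟩ => ⟨⟨h₁, h0, ht⟩, h₂, ht, hb⟩,
    fun ⟨⟨h₁, h0, ht⟩, h₂, _, hb⟩ => ⟨⟨⟨h₁, h₂⟩, h0, hb⟩, ht⟩⟩

theorem fst_last_eq_snd_zero_of_mem {n j J a c b : ℕ}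
    {p : (Fin (j + 1) → Fin (n + 2)) × (Fin (J + 1) → Fin (n + 2))}
    (hp : p ∈ Seg n j a c ×ˢ Seg n J c b) : p.1 (Fin.last j) = p.2 0 := by
  rw [Finset.mem_product, mem_Seg, mem_Seg] at hp
  exact Fin.ext (hp.1.2.2.trans hp.2.2.1.symm)

section FixedChangepoint

variable {n j J a t₀ b : ℕ}

theorem glueAt_mem_filter_Seg {p : (Fin (j + 1) → Fin (n + 2)) × (Fin (J + 1) → Fin (n + 2))}
    (hp : p ∈ Seg n j a t₀ ×ˢ Seg n J t₀ b) :
    glueAt p ∈ (Seg n (j + J) a b).filter (fun m => (m ⟨j, by omega⟩ : ℕ) = t₀) := by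
  rw [mem_filter_Seg_iff_splitAt, splitAt_glueAt (fst_last_eq_snd_zero_of_mem hp)]
  exact hp

def splitAtEquiv :
    (Seg n (j + J) a b).filter (fun m => (m ⟨j, by omega⟩ : ℕ) = t₀) ≃
      Seg n j a t₀ ×ˢ Seg n J t₀ b where
  toFun m := ⟨splitAt m, mem_filter_Seg_iff_splitAt.1 m.2⟩
  invFun p := ⟨glueAt p, glueAt_mem_filter_Seg p.2⟩
  left_inv m := Subtype.ext (glueAt_splitAt m.1)
  right_inv p := Subtype.ext (splitAt_glueAt (fst_last_eq_snd_zero_of_mem p.2))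

theorem sum_filter_Seg_W_eq_mul (g : ℕ → ℕ → ℝ) :
    ∑ m ∈ (Seg n (j + J) a b).filter (fun m => (m ⟨j, by omega⟩ : ℕ) = t₀), W n (j + J) g m
      = (∑ m ∈ Seg n j a t₀, W n j g m) * (∑ m ∈ Seg n J t₀ b, W n J g m) := by
  rw [Finset.sum_mul_sum, ← Finset.sum_product']
  exact Finset.sum_nbij' splitAt glueAt (fun _ => mem_filter_Seg_iff_splitAt.1)
    (fun _ => glueAt_mem_filter_Seg) (fun m _ => glueAt_splitAt m)
    (fun p hp => splitAt_glueAt (fst_last_eq_snd_zero_of_mem hp))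
    (fun m _ => W_eq_mul_splitAt n j J g m)

end FixedChangepoint

/-- The segmentations of [1,n+1) into K segments whose k-th segment
starts at t₀ are in bijection with M_{k-1}([1,t₀)) × M_{K-k+1}([t₀,n+1)), and
the weighted sum factorizes accordingly. -/
theorem segmentations_fixed_changepoint (n K k t₀ : ℕ) (hk1 : 1 ≤ k) (hk2 : k ≤ K)
    (g : ℕ → ℕ → ℝ) :
    Nonempty
      (((Seg n K 1 (n + 1)).filter
          (fun m => (m (⟨k - 1, by omega⟩ : Fin (K + 1)) : ℕ) = t₀))
        ≃ ((Seg n (k - 1) 1 t₀) ×ˢ (Seg n (K - k + 1) t₀ (n + 1)))) ∧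
    ∑ m ∈ (Seg n K 1 (n + 1)).filter
        (fun m => (m (⟨k - 1, by omega⟩ : Fin (K + 1)) : ℕ) = t₀), W n K g m
      = (∑ m ∈ Seg n (k - 1) 1 t₀, W n (k - 1) g m)
          * (∑ m ∈ Seg n (K - k + 1) t₀ (n + 1), W n (K - k + 1) g m) := by
  obtain ⟨J, rfl⟩ : ∃ J, K = (k - 1) + J := ⟨K - (k - 1), by omega⟩
  rw [show k - 1 + J - k + 1 = J by omega]
  exact ⟨⟨splitAtEquiv⟩, sum_filter_Seg_W_eq_mul g⟩
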